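/- arXiv:2304.04141 — 4 statements merged into one kernel-verified Lean document; each statement's English description precedes it below -/
import Mathlib

section
/- Let u ∈ M be nonzero and 0 ≠ h ∈ ℂ[u^⊥ ∩ N]. For f ∈ ℂ[N], write f = Σ_{k ∈ ℤ} f_k, where f_k is the part of f supported on {n ∈ N : ⟨u,n⟩ = k} (a finite sum). Then f is mutable with respect to (u,h) — i.e. μ^♯_{u,h}(f) ∈ ℂ[N] — if and only if for every k > 0, h^k divides f_{-k} in ℂ[N]. -/
/-- The Laurent polynomial ring `ℂ[N]` for `N = ℤ^d`, realized as the group algebra. -/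
abbrev LaurentAlg (d : ℕ) : Type := AddMonoidAlgebra ℂ (Fin d → ℤ)

/-- The fraction field `ℂ(N)` of the Laurent polynomial ring. -/
abbrev LaurentField (d : ℕ) : Type := FractionRing (LaurentAlg d)

/-- `φ : ℂ[N] → ℂ(N)` is the mutation homomorphism `μ^♯_{u,h}` iff it sends each
monomial `x^n` to `x^n · h^{⟨u,n⟩}`. -/
def IsMutationHom {d : ℕ} (u : (Fin d → ℤ) →+ ℤ) (h : LaurentAlg d)
    (φ : LaurentAlg d →ₐ[ℂ] LaurentField d) : Prop :=
  ∀ n : Fin d → ℤ,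
    φ (AddMonoidAlgebra.single n (1 : ℂ)) =
      algebraMap (LaurentAlg d) (LaurentField d) (AddMonoidAlgebra.single n (1 : ℂ)) *
        (algebraMap (LaurentAlg d) (LaurentField d) h) ^ (u n)

/-- `Φ : ℂ(N) → ℂ(N)` extends the mutation `μ^♯_{u,h}` iff it sends each
monomial `x^n` (viewed in the fraction field) to `x^n · h^{⟨u,n⟩}`. -/
def IsMutationFieldHom {d : ℕ} (u : (Fin d → ℤ) →+ ℤ) (h : LaurentAlg d)
    (Φ : LaurentField d →+* LaurentField d) : Prop :=
  ∀ n : Fin d → ℤ,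
    Φ (algebraMap (LaurentAlg d) (LaurentField d) (AddMonoidAlgebra.single n (1 : ℂ))) =
      algebraMap (LaurentAlg d) (LaurentField d) (AddMonoidAlgebra.single n (1 : ℂ)) *
        (algebraMap (LaurentAlg d) (LaurentField d) h) ^ (u n)

/-!
Splitting `f = ∑ f_k` by `u`-degree gives `μ(f) = ∑ f_k h^k`. The terms with `k ≥ 0` lie in
`ℂ[N]`, and `f_{-k} h^{-k}` does exactly when `h^k ∣ f_{-k}`. Conversely, if `μ(f) = a`, then
multiplying by `h^N` for `N` large clears all denominators: `h^N a = ∑ f_k h^{k+N}` holds in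
`ℂ[N]`. Since `h` has degree `0`, the degree `-k` part of this identity is
`h^N a_{-k} = f_{-k} h^{N-k}`, and cancelling `h^{N-k}` leaves `h^k ∣ f_{-k}`.
-/

open DirectSum

namespace AddMonoidAlgebra

theorem coe_decompose_gradeBy {M ι R : Type*} [AddMonoid M] [AddMonoid ι] [DecidableEq ι]
    [CommSemiring R] (f : M →+ ι) (x : R[M]) (i : ι) :
    (decompose (gradeBy R f) x i : R[M]) = ofCoeff (x.coeff.filter (f · = i)) := by
  induction x using induction_linear with
  | zero => simp [Finsupp.filter_zero]
  | add x y hx hy => simp [hx, hy, Finsupp.filter_add]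
  | single m r =>
    rw [GradesBy.decompose_single, DirectSum.of_apply]
    by_cases hm : f m = i
    · subst hm; simp [Finsupp.filter_single_of_pos]
    · simp [hm, Finsupp.filter_single_of_neg]

end AddMonoidAlgebra

section GradedRing

variable {ι A σ : Type*} [DecidableEq ι] [AddMonoid ι] [Semiring A] [SetLike σ A]
  [AddSubmonoidClass σ A] (𝒜 : ι → σ) [GradedRing 𝒜]

theorem DirectSum.coe_decompose_sum_support_mul [∀ (i) (x : 𝒜 i), Decidable (x ≠ 0)]
    (x : A) {g : ι → A} (hg : ∀ i, g i ∈ 𝒜 0) (j : ι) :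
    (decompose 𝒜 (∑ i ∈ (decompose 𝒜 x).support, (decompose 𝒜 x i : A) * g i) j : A) =
      decompose 𝒜 x j * g j := by
  have hcomp : ∀ i, (decompose 𝒜 ((decompose 𝒜 x i : A) * g i) j : A) =
      if i = j then (decompose 𝒜 x j : A) * g j else 0 := by
    intro i
    rw [coe_decompose_mul_of_right_mem_zero 𝒜 (hg i)]
    split_ifs with hij
    · subst hij; rw [decompose_of_mem_same 𝒜 (decompose 𝒜 x i).2]
    · rw [decompose_of_mem_ne 𝒜 (decompose 𝒜 x i).2 hij, zero_mul]
  rw [decompose_sum, DFinsupp.finsetSum_apply, AddSubmonoidClass.coe_finsetSum]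
  simp only [hcomp, Finset.sum_ite_eq', DFinsupp.mem_support_iff, ne_eq]
  split_ifs with hx
  · rw [hx, ZeroMemClass.coe_zero, zero_mul]
  · rfl

end GradedRing

section MutationCriterion

variable {A K σ F : Type*} [CommRing A] [Field K] [Algebra A K] [SetLike σ A]
  [AddSubmonoidClass σ A] (𝒜 : ℤ → σ) [GradedRing 𝒜] [FunLike F A K]
  [AddMonoidHomClass F A K] {h : A} {φ : F}

theorem map_eq_sum_algebraMap_decompose_mul_zpow [∀ (i) (x : 𝒜 i), Decidable (x ≠ 0)]
    (hφ : ∀ i, ∀ x ∈ 𝒜 i, φ x = algebraMap A K x * algebraMap A K h ^ i) (x : A) :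
    φ x = ∑ i ∈ (decompose 𝒜 x).support,
      algebraMap A K (decompose 𝒜 x i) * algebraMap A K h ^ i := by
  conv_lhs => rw [← sum_support_decompose 𝒜 x]
  rw [map_sum]
  exact Finset.sum_congr rfl fun i _ => hφ i _ (decompose 𝒜 x i).2

theorem pow_mul_map_eq_algebraMap_sum [IsFractionRing A K] [∀ (i) (x : 𝒜 i), Decidable (x ≠ 0)]
    (hne : h ≠ 0) (hφ : ∀ i, ∀ x ∈ 𝒜 i, φ x = algebraMap A K x * algebraMap A K h ^ i)
    (x : A) {N : ℕ} (hN : ∀ i ∈ (decompose 𝒜 x).support, -(N : ℤ) ≤ i) :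
    algebraMap A K h ^ N * φ x = algebraMap A K
      (∑ i ∈ (decompose 𝒜 x).support, decompose 𝒜 x i * h ^ (i + N).toNat) := by
  have hH : algebraMap A K h ≠ 0 := (map_ne_zero_iff _ (IsFractionRing.injective A K)).mpr hne
  rw [map_eq_sum_algebraMap_decompose_mul_zpow 𝒜 hφ, Finset.mul_sum, map_sum]
  refine Finset.sum_congr rfl fun i hi => ?_
  rw [map_mul, map_pow, ← zpow_natCast, ← zpow_natCast,
    Int.toNat_of_nonneg (by linarith [hN i hi]), mul_left_comm, ← zpow_add₀ hH, add_comm]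

theorem pow_dvd_decompose_neg_of_map_eq_algebraMap [IsFractionRing A K] (hh0 : h ∈ 𝒜 0)
    (hne : h ≠ 0) (hφ : ∀ i, ∀ x ∈ 𝒜 i, φ x = algebraMap A K x * algebraMap A K h ^ i)
    {x a : A} (ha : φ x = algebraMap A K a) {k : ℤ} (hk : 0 < k) :
    h ^ k.toNat ∣ (decompose 𝒜 x (-k) : A) := by
  classical
  have hH : algebraMap A K h ≠ 0 := (map_ne_zero_iff _ (IsFractionRing.injective A K)).mpr hne
  have hpow (n : ℕ) : h ^ n ∈ 𝒜 0 := by simpa using SetLike.pow_mem_graded n hh0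
  obtain ⟨b, hb⟩ := (insert (-k) (decompose 𝒜 x).support).bddBelow
  have hN (i) (hi : i ∈ insert (-k) (decompose 𝒜 x).support) : -((-b).toNat : ℤ) ≤ i := by
    have := hb hi; omega
  have hsum : h ^ (-b).toNat * a =
      ∑ i ∈ (decompose 𝒜 x).support, decompose 𝒜 x i * h ^ (i + (-b).toNat).toNat := by
    apply IsFractionRing.injective A K
    rw [map_mul, map_pow, ← ha,
      pow_mul_map_eq_algebraMap_sum 𝒜 hne hφ x fun i hi => hN i (Finset.mem_insert_of_mem hi)]
  have hcomp := congrArg (fun y => (decompose 𝒜 y (-k) : A)) hsum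
  simp only [coe_decompose_mul_of_left_mem_zero 𝒜 (hpow _),
    coe_decompose_sum_support_mul 𝒜 x fun i => hpow _] at hcomp
  set m := (-k + (-b).toNat).toNat
  have hsplit : h ^ (-b).toNat = h ^ m * h ^ k.toNat := by
    rw [← pow_add]; congr 1; have := hN (-k) (Finset.mem_insert_self _ _); omega
  rw [hsplit, mul_assoc, mul_comm (decompose 𝒜 x (-k) : A)] at hcomp
  refine ⟨decompose 𝒜 a (-k),
    IsFractionRing.injective A K (mul_left_cancel₀ (pow_ne_zero m hH) ?_)⟩
  simpa only [map_mul, map_pow] using congrArg (algebraMap A K) hcomp.symm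

theorem exists_map_eq_algebraMap_of_pow_dvd [IsFractionRing A K] (hne : h ≠ 0)
    (hφ : ∀ i, ∀ x ∈ 𝒜 i, φ x = algebraMap A K x * algebraMap A K h ^ i) {x : A}
    (hdvd : ∀ k : ℤ, 0 < k → h ^ k.toNat ∣ (decompose 𝒜 x (-k) : A)) :
    ∃ a, φ x = algebraMap A K a := by
  classical
  have hH : algebraMap A K h ≠ 0 := (map_ne_zero_iff _ (IsFractionRing.injective A K)).mpr hne
  have hterm (i : ℤ) :
      algebraMap A K (decompose 𝒜 x i) * algebraMap A K h ^ i ∈ (algebraMap A K).range := by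
    rcases le_or_gt 0 i with hi | hi
    · refine ⟨decompose 𝒜 x i * h ^ i.toNat, ?_⟩
      rw [map_mul, map_pow, ← zpow_natCast, Int.toNat_of_nonneg hi]
    · obtain ⟨c, hc⟩ := hdvd (-i) (neg_pos.mpr hi)
      rw [neg_neg] at hc
      refine ⟨c, ?_⟩
      rw [hc, map_mul, map_pow, ← zpow_natCast, Int.toNat_of_nonneg (neg_nonneg.mpr hi.le),
        mul_right_comm, ← zpow_add₀ hH, neg_add_cancel, zpow_zero, one_mul]
  obtain ⟨a, ha⟩ := Subring.sum_mem _ fun i _ => hterm i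
  exact ⟨a, (map_eq_sum_algebraMap_decompose_mul_zpow 𝒜 hφ x).trans ha.symm⟩

theorem exists_map_eq_algebraMap_iff_pow_dvd [IsFractionRing A K] (hh0 : h ∈ 𝒜 0)
    (hne : h ≠ 0) (hφ : ∀ i, ∀ x ∈ 𝒜 i, φ x = algebraMap A K x * algebraMap A K h ^ i) (x : A) :
    (∃ a, φ x = algebraMap A K a) ↔
      ∀ k : ℤ, 0 < k → h ^ k.toNat ∣ (decompose 𝒜 x (-k) : A) :=
  ⟨fun ⟨_, ha⟩ _ => pow_dvd_decompose_neg_of_map_eq_algebraMap 𝒜 hh0 hne hφ ha,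
    exists_map_eq_algebraMap_of_pow_dvd 𝒜 hne hφ⟩

end MutationCriterion

theorem IsMutationHom.map_of_mem_gradeBy {d : ℕ} {u : (Fin d → ℤ) →+ ℤ} {h : LaurentAlg d}
    {φ : LaurentAlg d →ₐ[ℂ] LaurentField d} (hφ : IsMutationHom u h φ) (i : ℤ)
    (x : LaurentAlg d) (hx : x ∈ AddMonoidAlgebra.gradeBy ℂ u i) :
    φ x = algebraMap (LaurentAlg d) (LaurentField d) x *
      algebraMap (LaurentAlg d) (LaurentField d) h ^ i := by
  have hsingle (n : Fin d → ℤ) (c : ℂ) :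
      φ (AddMonoidAlgebra.single n c) = algebraMap _ (LaurentField d)
        (AddMonoidAlgebra.single n c) * algebraMap _ (LaurentField d) h ^ u n := by
    rw [← mul_one c, ← smul_eq_mul, ← AddMonoidAlgebra.smul_single, map_smul, hφ n,
      Algebra.smul_def, Algebra.smul_def, map_mul, ← IsScalarTower.algebraMap_apply, mul_assoc]
  rw [← x.sum_coeff_single, Finsupp.sum, map_sum, map_sum, Finset.sum_mul]
  exact Finset.sum_congr rfl fun n hn => by rw [hsingle, hx n hn]

theorem mutable_iff_divisibility_general (d : ℕ) (u : (Fin d → ℤ) →+ ℤ)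
    (h : LaurentAlg d) (hne : h ≠ 0) (hsupp : ∀ n ∈ h.coeff.support, u n = 0)
    (φ : LaurentAlg d →ₐ[ℂ] LaurentField d) (hφ : IsMutationHom u h φ)
    (f : LaurentAlg d) :
    (∃ a : LaurentAlg d, φ f = algebraMap (LaurentAlg d) (LaurentField d) a) ↔
      ∀ k : ℤ, 0 < k →
        h ^ k.toNat ∣ (AddMonoidAlgebra.ofCoeff (Finsupp.filter (fun n => u n = -k) f.coeff) : LaurentAlg d) := by
  simp only [← AddMonoidAlgebra.coe_decompose_gradeBy]
  exact exists_map_eq_algebraMap_iff_pow_dvd (AddMonoidAlgebra.gradeBy ℂ u) hsupp hne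
    hφ.map_of_mem_gradeBy f

/-- Mutability criterion: writing `f = Σ_k f_k` for the `u`-graded
decomposition of `f` (with `f_k` supported on `{n : ⟨u,n⟩ = k}`), one has
`μ^♯_{u,h}(f) ∈ ℂ[N]` if and only if `h^k` divides `f_{-k}` in `ℂ[N]` for every `k > 0`. -/
theorem mutable_iff_divisibility (d : ℕ) (u : (Fin d → ℤ) →+ ℤ) (hu : u ≠ 0)
    (h : LaurentAlg d) (hne : h ≠ 0) (hsupp : ∀ n ∈ h.coeff.support, u n = 0)
    (φ : LaurentAlg d →ₐ[ℂ] LaurentField d) (hφ : IsMutationHom u h φ)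
    (f : LaurentAlg d) :
    (∃ a : LaurentAlg d, φ f = algebraMap (LaurentAlg d) (LaurentField d) a) ↔
      ∀ k : ℤ, 0 < k →
        h ^ k.toNat ∣ (AddMonoidAlgebra.ofCoeff (Finsupp.filter (fun n => u n = -k) f.coeff) : LaurentAlg d) :=
  mutable_iff_divisibility_general d u h hne hsupp φ hφ f
end

section
/- Let R be an integral domain and N a free abelian group of finite rank. For nonzero f, g in the group algebra R[N], the Newton polytope of the product is the Minkowski sum of the Newton polytopes: Newt(fg) = Newt(f) + Newt(g). -/
/-!
The inclusion `Newt(fg) ⊆ Newt(f) + Newt(g)` holds because `supp(fg) ⊆ supp f + supp g`.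
Conversely, `Newt(f) + Newt(g)` is the convex hull of `supp f + supp g`, hence of its vertices.
A vertex `a₀ + b₀` has a unique decomposition `a + b` with `a ∈ supp f`, `b ∈ supp g`: otherwise
it would be the midpoint of `a + b₀` and `a₀ + b`. So the coefficient of `fg` there is
`f(a₀) g(b₀) ≠ 0`, and every vertex lies in `supp(fg)`.
-/

open Pointwise

/-- The Newton polytope of a Laurent polynomial `f ∈ R[N]`, `N = ℤ^d`:
the convex hull in `N ⊗ ℝ = ℝ^d` of the support of `f`. -/
def NewtonPolytope {R : Type*} [CommRing R] {d : ℕ}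
    (f : AddMonoidAlgebra R (Fin d → ℤ)) : Set (Fin d → ℝ) :=
  convexHull ℝ ((fun (n : Fin d → ℤ) (i : Fin d) => (n i : ℝ)) '' (f.coeff.support : Set (Fin d → ℤ)))

theorem Set.Finite.convexHull_extremePoints_convexHull {E : Type*} [AddCommGroup E]
    [Module ℝ E] [TopologicalSpace E] [T2Space E] [IsTopologicalAddGroup E]
    [ContinuousSMul ℝ E] [LocallyConvexSpace ℝ E] {S : Set E} (hS : S.Finite) :
    convexHull ℝ ((convexHull ℝ S).extremePoints ℝ) = convexHull ℝ S := by
  have hext : ((convexHull ℝ S).extremePoints ℝ).Finite :=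
    hS.subset extremePoints_convexHull_subset
  have := closure_convexHull_extremePoints (hS.isCompact_convexHull ℝ) (convex_convexHull ℝ S)
  rwa [(hext.isCompact_convexHull ℝ).isClosed.closure_eq] at this

section

variable {𝕜 M E : Type*} [Field 𝕜] [LinearOrder 𝕜] [IsStrictOrderedRing 𝕜] [AddCommGroup M]
  [AddCommGroup E] [Module 𝕜 E] {φ : M →+ E}

theorem uniqueAdd_of_map_add_mem_extremePoints (hφ : Function.Injective φ) {s t : Finset M}
    {A : Set E} (hA : φ '' (↑s + ↑t) ⊆ A) {a₀ b₀ : M} (ha₀ : a₀ ∈ s) (hb₀ : b₀ ∈ t)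
    (hext : φ (a₀ + b₀) ∈ A.extremePoints 𝕜) : UniqueAdd s t a₀ b₀ := by
  intro a b ha hb hab
  have hmem : ∀ {x y}, x ∈ s → y ∈ t → φ (x + y) ∈ A := fun hx hy ↦
    hA ⟨_, Set.add_mem_add hx hy, rfl⟩
  have hmid : φ (a₀ + b₀) ∈ openSegment 𝕜 (φ (a + b₀)) (φ (a₀ + b)) := by
    have hsum : φ (a + b₀) + φ (a₀ + b) = φ (a₀ + b₀) + φ (a₀ + b₀) := by
      rw [← map_add, ← map_add, show a + b₀ + (a₀ + b) = a + b + (a₀ + b₀) by abel, hab]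
    refine ⟨1 / 2, 1 / 2, by norm_num, by norm_num, by norm_num, ?_⟩
    rw [← smul_add, hsum, ← two_smul 𝕜, smul_smul]
    norm_num
  obtain rfl : a = a₀ := add_right_cancel (hφ (hext.2 (hmem ha hb₀) (hmem ha₀ hb) hmid))
  exact ⟨rfl, add_left_cancel hab⟩

theorem AddMonoidAlgebra.extremePoints_convexHull_image_support_add_subset {k : Type*}
    [Semiring k] [NoZeroDivisors k] (hφ : Function.Injective φ) (f g : AddMonoidAlgebra k M) :
    (convexHull 𝕜 (φ '' (↑f.coeff.support + ↑g.coeff.support))).extremePoints 𝕜 ⊆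
      φ '' (f * g).coeff.support := by
  intro v hv
  obtain ⟨_, ⟨a₀, ha₀, b₀, hb₀, rfl⟩, rfl⟩ := extremePoints_convexHull_subset hv
  have huniq := uniqueAdd_of_map_add_mem_extremePoints hφ (subset_convexHull 𝕜 _) ha₀ hb₀ hv
  refine ⟨a₀ + b₀, ?_, rfl⟩
  rw [Finset.mem_coe, Finsupp.mem_support_iff, coeff_mul_add_of_uniqueAdd huniq]
  exact mul_ne_zero (Finsupp.mem_support_iff.1 ha₀) (Finsupp.mem_support_iff.1 hb₀)

end

theorem AddMonoidAlgebra.convexHull_image_support_mul {k M E : Type*} [Semiring k]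
    [NoZeroDivisors k] [AddCommGroup M] [AddCommGroup E] [Module ℝ E] [TopologicalSpace E]
    [T2Space E] [IsTopologicalAddGroup E] [ContinuousSMul ℝ E] [LocallyConvexSpace ℝ E]
    {φ : M →+ E} (hφ : Function.Injective φ) (f g : AddMonoidAlgebra k M) :
    convexHull ℝ (φ '' (f * g).coeff.support) =
      convexHull ℝ (φ '' f.coeff.support) + convexHull ℝ (φ '' g.coeff.support) := by
  classical
  rw [← convexHull_add, ← Set.image_add]
  refine (convexHull_mono (Set.image_mono ?_)).antisymm ?_
  · simpa only [Finset.coe_add] using Finset.coe_subset.2 (support_coeff_mul_subset f g)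
  · rw [← ((f.coeff.support.finite_toSet.add g.coeff.support.finite_toSet).image φ)
      |>.convexHull_extremePoints_convexHull]
    exact convexHull_mono (extremePoints_convexHull_image_support_add_subset hφ f g)

theorem newtonPolytope_mul_general {R : Type*} [CommRing R] [IsDomain R] {d : ℕ}
    (f g : AddMonoidAlgebra R (Fin d → ℤ)) :
    NewtonPolytope (f * g) = NewtonPolytope f + NewtonPolytope g :=
  AddMonoidAlgebra.convexHull_image_support_mul
    (φ := (Int.castAddHom ℝ).compLeft (Fin d)) Int.cast_injective.comp_left f g

/-- For an integral domain `R` and nonzero `f, g` in the Laurent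
polynomial ring `R[N]`, the Newton polytope of the product is the Minkowski sum of the
Newton polytopes: `Newt(fg) = Newt(f) + Newt(g)`. -/
theorem newtonPolytope_mul {R : Type*} [CommRing R] [IsDomain R] {d : ℕ}
    (f g : AddMonoidAlgebra R (Fin d → ℤ)) (hf : f ≠ 0) (hg : g ≠ 0) :
    NewtonPolytope (f * g) = NewtonPolytope f + NewtonPolytope g :=
  newtonPolytope_mul_general f g
end

section
/- Every triple (a,b,c) of positive integers satisfying the Markov equation a² + b² + c² = 3abc can be obtained from the triple (1,1,1) by a finite sequence of operations, each of which either permutes the entries of the triple or replaces (a,b,c) by (a,b,3ab−c). -/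
/-- One step in the Markov tree: either permute the entries of the triple, or apply the
Markov mutation `(a,b,c) ↦ (a,b,3ab−c)` in the third coordinate. -/
def MarkovStep : ℤ × ℤ × ℤ → ℤ × ℤ × ℤ → Prop := fun t t' =>
  ∃ a b c : ℤ, t = (a, b, c) ∧
    (t' = (a, c, b) ∨ t' = (b, a, c) ∨ t' = (b, c, a) ∨ t' = (c, a, b) ∨ t' = (c, b, a) ∨
      t' = (a, b, 3 * a * b - c))

private lemma markov_key : ∀ n : ℕ, ∀ a b c : ℤ, 0 < a → a ≤ b → b ≤ c →
    a ^ 2 + b ^ 2 + c ^ 2 = 3 * a * b * c → a + b + c ≤ (n : ℤ) →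
    Relation.ReflTransGen MarkovStep (1, 1, 1) (a, b, c) := by
  intro n
  induction n using Nat.strong_induction_on with
  | _ n ih =>
    intro a b c ha hab hbc heq hsum
    have hb : 0 < b := lt_of_lt_of_le ha hab
    have hc : 0 < c := lt_of_lt_of_le hb hbc
    by_cases h11 : a = 1 ∧ b = 1
    · obtain ⟨rfl, rfl⟩ := h11
      have hfac : (c - 1) * (c - 2) = 0 := by nlinarith
      rcases mul_eq_zero.mp hfac with h1 | h2
      · have : c = 1 := by linarith
        subst this
        exact Relation.ReflTransGen.refl
      · have : c = 2 := by linarith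
        subst this
        exact Relation.ReflTransGen.refl.tail
          ⟨1, 1, 1, rfl, Or.inr <| Or.inr <| Or.inr <| Or.inr <| Or.inr (by norm_num)⟩
    · -- not (1,1,_): descent
      have hne : 2 ≤ a ∨ (a = 1 ∧ 2 ≤ b) := by omega
      have hlt : a ^ 2 + 2 * b ^ 2 - 3 * a * b ^ 2 < 0 := by
        rcases hne with h2 | ⟨rfl, h2⟩
        · nlinarith
        · nlinarith
      have hprod : (b - c) * (b - (3 * a * b - c)) = a ^ 2 + 2 * b ^ 2 - 3 * a * b ^ 2 := by
        linear_combination -heq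
      have hdb : 3 * a * b - c < b := by
        by_contra h'
        push_neg at h'
        nlinarith [mul_nonneg (sub_nonneg.mpr hbc) (sub_nonneg.mpr h')]
      have hcc' : c * (3 * a * b - c) = a ^ 2 + b ^ 2 := by linear_combination -heq
      have hd : 0 < 3 * a * b - c := by
        by_contra h'
        push_neg at h'
        nlinarith
      have heq' : a ^ 2 + b ^ 2 + (3 * a * b - c) ^ 2 = 3 * a * b * (3 * a * b - c) := by
        linear_combination heq
      have hn3 : (3 : ℤ) ≤ (n : ℤ) := le_trans (by linarith) hsum
      have hn1 : 1 ≤ n := by exact_mod_cast by omega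
      have hsum' : a + b + (3 * a * b - c) ≤ ((n - 1 : ℕ) : ℤ) := by
        have : ((n - 1 : ℕ) : ℤ) = (n : ℤ) - 1 := by omega
        rw [this]; linarith
      have hnlt : n - 1 < n := by omega
      rcases le_total a (3 * a * b - c) with had | had
      · -- reach (a, d, b)
        have hreach := ih (n - 1) hnlt a (3 * a * b - c) b ha had (le_of_lt hdb)
          (by linear_combination heq') (by linarith)
        have s1 : MarkovStep (a, 3 * a * b - c, b) (a, b, 3 * a * b - c) :=
          ⟨a, 3 * a * b - c, b, rfl, Or.inl rfl⟩
        have s2 : MarkovStep (a, b, 3 * a * b - c) (a, b, c) :=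
          ⟨a, b, 3 * a * b - c, rfl, Or.inr <| Or.inr <| Or.inr <| Or.inr <| Or.inr
            (by rw [Prod.mk.injEq, Prod.mk.injEq]; exact ⟨rfl, rfl, by ring⟩)⟩
        exact (hreach.tail s1).tail s2
      · -- reach (d, a, b)
        have hreach := ih (n - 1) hnlt (3 * a * b - c) a b hd had hab
          (by linear_combination heq') (by linarith)
        have s1 : MarkovStep (3 * a * b - c, a, b) (a, b, 3 * a * b - c) :=
          ⟨3 * a * b - c, a, b, rfl, Or.inr <| Or.inr <| Or.inl rfl⟩
        have s2 : MarkovStep (a, b, 3 * a * b - c) (a, b, c) :=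
          ⟨a, b, 3 * a * b - c, rfl, Or.inr <| Or.inr <| Or.inr <| Or.inr <| Or.inr
            (by rw [Prod.mk.injEq, Prod.mk.injEq]; exact ⟨rfl, rfl, by ring⟩)⟩
        exact (hreach.tail s1).tail s2

/-- Every positive-integer solution `(a,b,c)` of the Markov equation
`a² + b² + c² = 3abc` is obtained from `(1,1,1)` by a finite sequence of operations, each
of which either permutes the entries or replaces `(a,b,c)` by `(a,b,3ab−c)`. -/
theorem markov_tree_connected (a b c : ℤ) (ha : 0 < a) (hb : 0 < b) (hc : 0 < c)
    (h : a ^ 2 + b ^ 2 + c ^ 2 = 3 * a * b * c) :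
    Relation.ReflTransGen MarkovStep (1, 1, 1) (a, b, c) := by
  have hn : ∀ x y z : ℤ, x + y + z ≤ (((a + b + c).toNat : ℕ) : ℤ) ↔ x + y + z ≤ a + b + c := by
    intro x y z
    rw [Int.toNat_of_nonneg (by linarith)]
  rcases le_total a b with hab | hab
  · rcases le_total b c with hbc | hbc
    · exact markov_key (a + b + c).toNat a b c ha hab hbc h ((hn a b c).mpr le_rfl)
    · rcases le_total a c with hac | hac
      · have := markov_key (a + b + c).toNat a c b ha hac hbc (by linear_combination h)
          ((hn a c b).mpr (by linarith))
        exact this.tail ⟨a, c, b, rfl, Or.inl rfl⟩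
      · have := markov_key (a + b + c).toNat c a b hc hac hab (by linear_combination h)
          ((hn c a b).mpr (by linarith))
        exact this.tail ⟨c, a, b, rfl, Or.inr <| Or.inr <| Or.inl rfl⟩
  · rcases le_total a c with hac | hac
    · have := markov_key (a + b + c).toNat b a c hb hab hac (by linear_combination h)
        ((hn b a c).mpr (by linarith))
      exact this.tail ⟨b, a, c, rfl, Or.inr <| Or.inl rfl⟩
    · rcases le_total b c with hbc | hbc
      · have := markov_key (a + b + c).toNat b c a hb hbc hac (by linear_combination h)
          ((hn b c a).mpr (by linarith))
        exact this.tail ⟨b, c, a, rfl, Or.inr <| Or.inr <| Or.inr <| Or.inl rfl⟩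
      · have := markov_key (a + b + c).toNat c b a hc hbc hab (by linear_combination h)
          ((hn c b a).mpr (by linarith))
        exact this.tail ⟨c, b, a, rfl, Or.inr <| Or.inr <| Or.inr <| Or.inr <| Or.inl rfl⟩
end

section
/- Let (a,b,c) be a positive-integer solution of the Markov equation a² + b² + c² = 3abc with a ≤ b ≤ c. If c > 1 then 3ab − c < c; consequently the Markov mutation at the largest coordinate strictly decreases the maximum entry unless (a,b,c) = (1,1,1), and the descent to (1,1,1) terminates in finitely many steps. -/
/-- (Descent / Vieta jumping for Markov triples.) Let `(a,b,c)` be a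
positive-integer solution of `a² + b² + c² = 3abc` with `a ≤ b ≤ c`. If `c > 1` then
`3ab − c < c`, so mutation at the largest coordinate strictly decreases the maximum entry;
and if `c = 1` then `(a,b,c) = (1,1,1)` — hence the descent terminates at `(1,1,1)` in
finitely many steps. -/
theorem markov_descent (a b c : ℤ) (ha : 0 < a) (hb : 0 < b) (hc : 0 < c)
    (hab : a ≤ b) (hbc : b ≤ c)
    (h : a ^ 2 + b ^ 2 + c ^ 2 = 3 * a * b * c) :
    (1 < c → 3 * a * b - c < c) ∧ (c = 1 → a = 1 ∧ b = 1 ∧ c = 1) := by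
  constructor
  · intro h1c
    by_contra hcon
    push_neg at hcon
    -- hcon : c ≤ 3ab - c, so c² ≤ c(3ab - c) = a² + b²
    have hcc : c ^ 2 ≤ a ^ 2 + b ^ 2 := by nlinarith
    have ha1 : a = 1 := by nlinarith
    subst ha1
    have hcb : c = b := by nlinarith
    subst hcb
    have : c ^ 2 = 1 := by nlinarith
    nlinarith
  · intro hc1
    subst hc1
    have hb1 : b = 1 := le_antisymm hbc hb
    subst hb1
    exact ⟨le_antisymm hab ha, rfl, rfl⟩
end
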